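/- If T is a monad on C whose Kleisli category Kl(T) is Cppo-enriched and S̄ : Kl(T) → Kl(T) is a locally continuous lifting of S : C → C carrying a monad structure on Kl(T), then the Kleisli category Kl(TS) = Kl(S̄) is Cppo-enriched. -/

import Mathlib

open CategoryTheory OmegaCompletePartialOrder

namespace CategoryTheory.Monad

variable {D : Type*} [Category D] [∀ X Y : D, OmegaCompletePartialOrder (X ⟶ Y)]

theorem ωScottContinuous_kleisliComp_right (M : Monad D)
    (hpost : ∀ {X Y Z : D} (f : X ⟶ Y), ωScottContinuous fun g : Y ⟶ Z => f ≫ g)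
    (hpre : ∀ {X Y Z : D} (g : Y ⟶ Z), ωScottContinuous fun f : X ⟶ Y => f ≫ g)
    (hmap : ∀ {X Y : D}, ωScottContinuous fun f : X ⟶ Y => M.map f)
    {X Y Z : D} (f : X ⟶ M.obj Y) :
    ωScottContinuous fun g : Y ⟶ M.obj Z => f ≫ M.map g ≫ M.μ.app Z :=
  (hpost f).comp ((hpre _).comp hmap)

end CategoryTheory.Monad

variable {C : Type*} [Category C] (T : Monad C)

theorem kleisli_of_lifted_monad_is_cppo_enriched
    [∀ X Y : Kleisli T, OmegaCompletePartialOrder (X ⟶ Y)]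
    [∀ X Y : Kleisli T, OrderBot (X ⟶ Y)]
    -- `Kl(T)` is Cppo-enriched: composition is monotone and ω-continuous on both sides
    (hpost : ∀ {X Y Z : Kleisli T} (f : X ⟶ Y), Monotone (fun g : Y ⟶ Z => f ≫ g))
    (hpre : ∀ {X Y Z : Kleisli T} (g : Y ⟶ Z), Monotone (fun f : X ⟶ Y => f ≫ g))
    (hpostCont : ∀ {X Y Z : Kleisli T} (f : X ⟶ Y) (c : Chain (Y ⟶ Z)),
      f ≫ ωSup c = ωSup (c.map ⟨fun g => f ≫ g, hpost f⟩))
    (hpreCont : ∀ {X Y Z : Kleisli T} (g : Y ⟶ Z) (c : Chain (X ⟶ Y)),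
      ωSup c ≫ g = ωSup (c.map ⟨fun f => f ≫ g, hpre g⟩))
    -- a monad `S̄` on `Kl(T)` …
    (S' : Monad (Kleisli T))
    -- … which is locally monotone and locally continuous
    (hmono : ∀ {X Y : Kleisli T}, Monotone (fun f : X ⟶ Y => S'.map f))
    (hcont : ∀ {X Y : Kleisli T} (c : Chain (X ⟶ Y)),
      S'.map (ωSup c) = ωSup (c.map ⟨fun f => S'.map f, hmono⟩))
    -- … and which is a lifting of a functor `S : C ⥤ C`
    (S : C ⥤ C)
    (hlift : Kleisli.Adjunction.toKleisli T ⋙ S'.toFunctor =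
      S ⋙ Kleisli.Adjunction.toKleisli T) :
    -- then `Kl(S̄)` is Cppo-enriched: its composition
    -- `g·f = f ≫ S̄.map g ≫ S̄.μ` is monotone and ω-continuous in each argument
    -- (its hom-sets are hom-sets of `Kl(T)`, hence pointed ω-cpos)
    (∀ {X Y Z : Kleisli T} (f : X ⟶ S'.obj Y),
      ∃ hm : Monotone (fun g : Y ⟶ S'.obj Z => f ≫ S'.map g ≫ S'.μ.app Z),
        ∀ c : Chain (Y ⟶ S'.obj Z),
          f ≫ S'.map (ωSup c) ≫ S'.μ.app Z =
            ωSup (c.map ⟨fun g => f ≫ S'.map g ≫ S'.μ.app Z, hm⟩)) ∧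
    (∀ {X Y Z : Kleisli T} (g : Y ⟶ S'.obj Z),
      ∃ hm : Monotone (fun f : X ⟶ S'.obj Y => f ≫ S'.map g ≫ S'.μ.app Z),
        ∀ c : Chain (X ⟶ S'.obj Y),
          ωSup c ≫ S'.map g ≫ S'.μ.app Z =
            ωSup (c.map ⟨fun f => f ≫ S'.map g ≫ S'.μ.app Z, hm⟩)) := by
  have post : ∀ {X Y Z : Kleisli T} (f : X ⟶ Y), ωScottContinuous fun g : Y ⟶ Z => f ≫ g :=
    fun f => ωScottContinuous.of_monotone_map_ωSup ⟨hpost f, hpostCont f⟩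
  have pre : ∀ {X Y Z : Kleisli T} (g : Y ⟶ Z), ωScottContinuous fun f : X ⟶ Y => f ≫ g :=
    fun g => ωScottContinuous.of_monotone_map_ωSup ⟨hpre g, hpreCont g⟩
  have map : ∀ {X Y : Kleisli T}, ωScottContinuous fun f : X ⟶ Y => S'.map f :=
    fun {_ _} => ωScottContinuous.of_monotone_map_ωSup ⟨hmono, hcont⟩
  -- `@map`: otherwise the implicit lambda feature unfolds `ωScottContinuous` in the expected type
  exact ⟨fun f => (S'.ωScottContinuous_kleisliComp_right post pre @map f).monotone_map_ωSup,
    fun g => (pre _).monotone_map_ωSup⟩
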